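/- Strict decrease of maximal costs when the hierarchy strictly shrinks: in a quantitative reachability game, if P^I_α(v) ≠ P^I_{α+1}(v) for some I and v, then there exist a subset J ⊆ Π and an edge (u,u') ∈ E such that the maximal cost vector satisfies Λ̄(P^J_{α+1}(u), u') ≠ Λ̄(P^J_α(u), u'); conversely, if P^I_α(v) = P^I_{α+1}(v) then Λ̄(P^I_α(v), v') = Λ̄(P^I_{α+1}(v), v') for all edges (v,v'). -/

import Mathlib

open Classical

noncomputable section

/-- A multiplayer turn-based quantitative game on a directed graph:
`owner` assigns each vertex to a player, `E` is the edge relation (every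
vertex has a successor), and `cost i` is player `i`'s cost function on
infinite sequences of vertices (to be minimized), valued in `ℝ ∪ {±∞}`. -/
structure QGame (P V : Type) where
  owner : V → P
  E : V → V → Prop
  succ_exists : ∀ v, ∃ v', E v v'
  cost : P → (ℕ → V) → EReal

namespace QGame

variable {P V : Type}

/-- An infinite play of the game: consecutive vertices are joined by edges. -/
def IsPlay (G : QGame P V) (ρ : ℕ → V) : Prop := ∀ n, G.E (ρ n) (ρ (n + 1))

/-- Concatenation `hρ` of a finite history `h` with an infinite play `ρ`. -/
def prepend (h : List V) (ρ : ℕ → V) : ℕ → V := fun n =>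
  if hn : n < h.length then h.get ⟨n, hn⟩ else ρ (n - h.length)

/-- The prefix of length `n` of a play, as a list. -/
def playPrefix (ρ : ℕ → V) (n : ℕ) : List V := List.ofFn fun k : Fin n => ρ k

/-- `hv` is a history of the game initialized at `v0`: here `h` is the strict
past and `v` the current vertex; the sequence `h ++ [v]` starts at `v0` and
follows edges. -/
def IsHist (G : QGame P V) (v0 : V) (h : List V) (v : V) : Prop :=
  (h ++ [v]).head? = some v0 ∧ List.Chain' G.E (h ++ [v])

/-- A (turn-based) strategy profile: given the past history and the current
vertex, choose the next vertex.  An individual strategy of player `i` is of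
the same type; only its values at vertices owned by `i` matter. -/
abbrev Strat (P V : Type) := List V → V → V

/-- A profile/strategy is valid if it always follows edges. -/
def Valid (G : QGame P V) (σ : Strat P V) : Prop := ∀ h v, G.E v (σ h v)

/-- History/current-vertex pair produced after `n` steps of `σ` from `v`. -/
def outcomeAux (σ : Strat P V) (v : V) : ℕ → List V × V
  | 0 => ([], v)
  | n + 1 =>
      let p := outcomeAux σ v n
      (p.1 ++ [p.2], σ p.1 p.2)

/-- The outcome play of profile `σ` from initial vertex `v`. -/
def outcome (σ : Strat P V) (v : V) (n : ℕ) : V := (outcomeAux σ v n).2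

/-- The profile where player `i` unilaterally deviates to strategy `τ`
from the profile `σ`. -/
def devProf (G : QGame P V) (σ τ : Strat P V) (i : P) : Strat P V :=
  fun h v => if G.owner v = i then τ h v else σ h v

/-- The set of deviation steps of `τ` from `σ` (for player `i`, from `v`):
positions `n` along the outcome of the deviated profile where the current
vertex belongs to player `i` and `τ` disagrees with `σ`. -/
def devSteps (G : QGame P V) (σ τ : Strat P V) (i : P) (v : V) : Set ℕ :=
  {n | G.owner (outcome (G.devProf σ τ i) v n) = i ∧
       σ (outcomeAux (G.devProf σ τ i) v n).1 (outcome (G.devProf σ τ i) v n) ≠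
       τ (outcomeAux (G.devProf σ τ i) v n).1 (outcome (G.devProf σ τ i) v n)}

/-- `τ` is finitely deviating from `σ`. -/
def FinDev (G : QGame P V) (σ τ : Strat P V) (i : P) (v : V) : Prop :=
  (G.devSteps σ τ i v).Finite

/-- `τ` is one-shot deviating from `σ`: its unique deviation step is at the
initial vertex. -/
def OneShotDev (G : QGame P V) (σ τ : Strat P V) (i : P) (v : V) : Prop :=
  G.devSteps σ τ i v = {0}

/-- Nash equilibrium of the profile `σ` from `v`, with respect to a cost
assignment `c` (no player has a profitable unilateral deviation). -/
def IsNEwith (G : QGame P V) (c : P → (ℕ → V) → EReal) (σ : Strat P V) (v : V) : Prop :=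
  ∀ i τ, G.Valid τ →
    c i (outcome σ v) ≤ c i (outcome (G.devProf σ τ i) v)

/-- Weak Nash equilibrium: no profitable finitely deviating strategy. -/
def IsWeakNEwith (G : QGame P V) (c : P → (ℕ → V) → EReal) (σ : Strat P V) (v : V) : Prop :=
  ∀ i τ, G.Valid τ → G.FinDev σ τ i v →
    c i (outcome σ v) ≤ c i (outcome (G.devProf σ τ i) v)

/-- Very weak Nash equilibrium: no profitable one-shot deviating strategy. -/
def IsVeryWeakNEwith (G : QGame P V) (c : P → (ℕ → V) → EReal) (σ : Strat P V) (v : V) : Prop :=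
  ∀ i τ, G.Valid τ → G.OneShotDev σ τ i v →
    c i (outcome σ v) ≤ c i (outcome (G.devProf σ τ i) v)

/-- The strategy profile induced by `σ` in the subgame after history `h`. -/
def subStrat (σ : Strat P V) (h : List V) : Strat P V := fun g v => σ (h ++ g) v

/-- The cost functions of the subgame after history `h`. -/
def subCost (G : QGame P V) (h : List V) : P → (ℕ → V) → EReal :=
  fun i ρ => G.cost i (prepend h ρ)

/-- Subgame perfect equilibrium: Nash equilibrium in every subgame. -/
def IsSPE (G : QGame P V) (v0 : V) (σ : Strat P V) : Prop :=
  ∀ h v, G.IsHist v0 h v → G.IsNEwith (G.subCost h) (subStrat σ h) v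

/-- Weak subgame perfect equilibrium: weak NE in every subgame. -/
def IsWeakSPE (G : QGame P V) (v0 : V) (σ : Strat P V) : Prop :=
  ∀ h v, G.IsHist v0 h v → G.IsWeakNEwith (G.subCost h) (subStrat σ h) v

/-- Very weak subgame perfect equilibrium: very weak NE in every subgame. -/
def IsVeryWeakSPE (G : QGame P V) (v0 : V) (σ : Strat P V) : Prop :=
  ∀ h v, G.IsHist v0 h v → G.IsVeryWeakNEwith (G.subCost h) (subStrat σ h) v

/-- One elimination step: `ρ` (a potential outcome in the subgame after `h`)
is erased if some player `i` controlling a vertex `ρ n` along `hρ` has an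
alternative edge to some `v' ≠ ρ (n+1)` such that every play `ρ'` in the
current potential set after the extended history gives `i` a strictly
smaller cost than `hρ`. -/
def Eset (G : QGame P V) (Pr : List V → V → Set (ℕ → V)) (h : List V) :
    Set (ℕ → V) :=
  {ρ | ∃ n v', G.E (ρ n) v' ∧ v' ≠ ρ (n + 1) ∧
      ∀ ρ' ∈ Pr (h ++ playPrefix ρ (n + 1)) v',
        G.cost (G.owner (ρ n)) (prepend (h ++ playPrefix ρ (n + 1)) ρ') <
          G.cost (G.owner (ρ n)) (prepend h ρ)}

/-- The transfinite sequence `P_α(hv)` of sets of potential outcomes of weak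
Nash equilibria in the subgame `(G|_h, v)`: all plays at stage `0`, removal
of `E_α` at successors, intersections at limits. -/
def Pset (G : QGame P V) (α : Ordinal) : List V → V → Set (ℕ → V) :=
  Ordinal.limitRecOn (motive := fun _ => List V → V → Set (ℕ → V)) α
    (fun _h v => {ρ | G.IsPlay ρ ∧ ρ 0 = v})
    (fun _ Pr => fun h v => Pr h v \ G.Eset Pr h)
    (fun α _ Pr => fun h v => ⋂ (β : Ordinal) (hβ : β < α), Pr β hβ h v)

/-- A sequence of plays converges to `ρ` (in the product topology on `V^ω`
with `V` discrete) iff every finite prefix of `ρ` is eventually a prefix of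
the members of the sequence. -/
def Converges (ρs : ℕ → ℕ → V) (ρ : ℕ → V) : Prop :=
  ∀ m, ∃ N, ∀ n ≥ N, ∀ k ≤ m, ρs n k = ρ k

/-- Upper semicontinuity of a cost function on plays. -/
def USCcost (G : QGame P V) (c : (ℕ → V) → EReal) : Prop :=
  ∀ (ρs : ℕ → ℕ → V) (ρ : ℕ → V), (∀ n, G.IsPlay (ρs n)) → G.IsPlay ρ →
    Converges ρs ρ →
      Filter.limsup (fun n => c (ρs n)) Filter.atTop ≤ c ρ

/-- A strategy (profile) is finite-memory if it is computed by a Moore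
machine: a finite set `M` of memory states, updated while reading the
history, determines the move. -/
def FinMem (σ : Strat P V) : Prop :=
  ∃ (M : Type) (_ : Finite M) (m0 : M) (upd : M → V → M) (act : M → V → V),
    ∀ h v, σ h v = act (h.foldl upd m0) v

/-- Quantitative reachability cost: the least index at which `ρ` visits the
target set `T`, and `+∞` if `T` is never visited. -/
def reachCost (T : Set V) (ρ : ℕ → V) : EReal :=
  if h : ∃ n, ρ n ∈ T then ((Nat.find h : ℕ) : EReal) else ⊤

/-- `G` is a quantitative reachability game with target sets `T i`. -/
def IsReachGame (G : QGame P V) (T : P → Set V) : Prop :=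
  ∀ i ρ, G.cost i ρ = reachCost (T i) ρ

/-- The set of players that have not visited their target set along the
history `h`. -/
def Iset (T : P → Set V) (h : List V) : Set P := {i | ∀ u ∈ h, u ∉ T i}

end QGame

namespace QGame

/-- The vector `Λ̄(P^I_α(v), v')` of maximal costs of the plays of `P_α(hv)`
starting with the edge `(v, v')`, with the convention that the component of
a player `i` who has already reached his target along `h` is `-1` (sup over
the empty set is `⊥`). -/
noncomputable def LamVec {P V : Type} (G : QGame P V) (T : P → Set V)
    (α : Ordinal) (h : List V) (v v' : V) : P → EReal :=
  fun i =>
    if i ∈ Iset T h then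
      sSup ((G.cost i) '' {ρ | ρ ∈ G.Pset α h v ∧ ρ 1 = v'})
    else -1

end QGame

/-!
If `P_α(hv) ≠ P_{α+1}(hv)`, some play `ρ ∈ P_α(hv)` is eliminated by a deviation of the
owner `i` of a vertex `ρ n`. Passing to the subgame after `g = h ρ₀ ⋯ ρₙ₋₁`, the suffix `π`
of `ρ` is eliminated by a move at its first vertex, and so is every play of `P_α(g π₀)`
through the edge `(π₀, π₁)` that costs `i` at least as much as `π`. Hence all plays through
that edge surviving at stage `α + 1` are strictly cheaper for `i` than `π`. As `P_{α+1}(g π₀)`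
is closed in the compact space `V^ω` (hitting times only depend on finite prefixes), their
costs are bounded by some `m ≤ cost_i(π)`, so `Λ_i` strictly drops on `(π₀, π₁)`. If `i` has
already reached his target, the move can only be eliminating if no play follows it; then no
play through `(π₀, π₁)` survives at all, and `Λ_j` drops from `≥ 0` to `-∞` for any player
`j` still in the game.
-/

namespace QGame

variable {P V : Type}

def shift (ρ : ℕ → V) (n : ℕ) : ℕ → V := fun k => ρ (n + k)

@[simp] lemma shift_apply (ρ : ℕ → V) (n k : ℕ) : shift ρ n k = ρ (n + k) := rfl

@[simp] lemma playPrefix_length (ρ : ℕ → V) (n : ℕ) : (playPrefix ρ n).length = n := by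
  simp [playPrefix]

lemma playPrefix_getElem (ρ : ℕ → V) {n k : ℕ} (hk : k < n) :
    (playPrefix ρ n)[k]'(by simpa using hk) = ρ k := by
  simp [playPrefix]

lemma playPrefix_succ (ρ : ℕ → V) (n : ℕ) :
    playPrefix ρ (n + 1) = playPrefix ρ n ++ [ρ n] := by
  simp only [playPrefix, List.ofFn_succ_last, Fin.val_castSucc, Fin.val_last]

lemma playPrefix_one (ρ : ℕ → V) : playPrefix ρ 1 = [ρ 0] := by
  simp [playPrefix]

lemma playPrefix_add (ρ : ℕ → V) (n m : ℕ) :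
    playPrefix ρ n ++ playPrefix (shift ρ n) m = playPrefix ρ (n + m) := by
  induction m with
  | zero => simp [playPrefix]
  | succ m ih =>
    rw [playPrefix_succ, ← List.append_assoc, ih, shift_apply, ← playPrefix_succ]
    rfl

lemma playPrefix_congr {ρ ρ' : ℕ → V} {n : ℕ} (hag : ∀ k < n, ρ k = ρ' k) :
    playPrefix ρ n = playPrefix ρ' n :=
  congrArg List.ofFn (funext fun k => hag k k.2)

lemma prepend_of_lt {L : List V} (ρ : ℕ → V) {k : ℕ} (hk : k < L.length) :
    prepend L ρ k = L[k] := dif_pos hk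

lemma prepend_of_not_lt {L : List V} (ρ : ℕ → V) {k : ℕ} (hk : ¬k < L.length) :
    prepend L ρ k = ρ (k - L.length) := dif_neg hk

@[simp] lemma prepend_add_length (L : List V) (ρ : ℕ → V) (k : ℕ) :
    prepend L ρ (k + L.length) = ρ k := by
  rw [prepend_of_not_lt ρ (by omega), Nat.add_sub_cancel]

lemma prepend_append_shift (h : List V) (ρ : ℕ → V) (n : ℕ) :
    prepend (h ++ playPrefix ρ n) (shift ρ n) = prepend h ρ := by
  funext k
  by_cases hk : k < h.length
  · rw [prepend_of_lt _ (by simp; omega), prepend_of_lt _ hk, List.getElem_append_left hk]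
  by_cases hkn : k < h.length + n
  · rw [prepend_of_lt _ (by simp; omega), prepend_of_not_lt _ hk,
      List.getElem_append_right (by omega), playPrefix_getElem _ (by omega)]
  · rw [prepend_of_not_lt _ (by simpa using hkn), prepend_of_not_lt _ hk, shift_apply]
    simp only [List.length_append, playPrefix_length]
    congr 1
    omega

section ReachCost

variable (W : Set V) {f g : ℕ → V}

lemma reachCost_of_exists (hf : ∃ k, f k ∈ W) : reachCost W f = (Nat.find hf : ℕ) := dif_pos hf

lemma reachCost_of_not_exists (hf : ¬∃ k, f k ∈ W) : reachCost W f = ⊤ := dif_neg hf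

lemma reachCost_lt_natCast_iff {m : ℕ} : reachCost W f < m ↔ ∃ k < m, f k ∈ W := by
  by_cases hf : ∃ k, f k ∈ W
  · rw [reachCost_of_exists W hf, EReal.natCast_lt_iff, Nat.find_lt_iff]
  · rw [reachCost_of_not_exists W hf]
    simpa using fun k _ hk => hf ⟨k, hk⟩

lemma reachCost_le_natCast_iff {m : ℕ} : reachCost W f ≤ m ↔ ∃ k ≤ m, f k ∈ W := by
  by_cases hf : ∃ k, f k ∈ W
  · rw [reachCost_of_exists W hf, EReal.natCast_le_iff, Nat.find_le_iff]
  · rw [reachCost_of_not_exists W hf]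
    simpa [EReal.natCast_ne_top] using fun k _ hk => hf ⟨k, hk⟩

lemma reachCost_lt_top_iff : reachCost W f < ⊤ ↔ ∃ k, f k ∈ W := by
  by_cases hf : ∃ k, f k ∈ W
  · rw [reachCost_of_exists W hf]
    exact iff_of_true (EReal.natCast_ne_top _).lt_top hf
  · rw [reachCost_of_not_exists W hf]
    exact iff_of_false (lt_irrefl _) hf

lemma reachCost_congr {m : ℕ} (hfg : ∀ k < m, f k = g k) (hf : reachCost W f < m) :
    reachCost W f = reachCost W g := by
  obtain ⟨k, hk, hkW⟩ := (reachCost_lt_natCast_iff W).1 hf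
  have hf' : ∃ k, f k ∈ W := ⟨k, hkW⟩
  have hg' : ∃ k, g k ∈ W := ⟨k, hfg k hk ▸ hkW⟩
  have hfk : Nat.find hf' ≤ k := Nat.find_min' hf' hkW
  have hgk : Nat.find hg' ≤ k := Nat.find_min' hg' (hfg k hk ▸ hkW)
  rw [reachCost_of_exists W hf', reachCost_of_exists W hg', Nat.le_antisymm
    (Nat.find_min' hf' ((hfg (Nat.find hg') (by omega)).symm ▸ Nat.find_spec hg'))
    (Nat.find_min' hg' (hfg (Nat.find hf') (by omega) ▸ Nat.find_spec hf'))]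

lemma reachCost_prepend {L : List V} (hL : ∀ u ∈ L, u ∉ W) :
    reachCost W (prepend L f) = L.length + reachCost W f := by
  have hprefix : ∀ k < L.length, prepend L f k ∉ W := fun k hk => by
    rw [prepend_of_lt f hk]
    exact hL _ (List.getElem_mem hk)
  by_cases hf : ∃ k, f k ∈ W
  · have hLf : ∃ k, prepend L f k ∈ W := ⟨_, (prepend_add_length L f _).symm ▸ Nat.find_spec hf⟩
    have hshift : ∃ k, prepend L f (k + L.length) ∈ W := by simpa only [prepend_add_length]
    have hlen : L.length ≤ Nat.find hLf := (Nat.le_find_iff hLf _).2 hprefix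
    rw [reachCost_of_exists W hLf, reachCost_of_exists W hf, ← Nat.find_add (hₘ := hshift) hlen,
      Nat.find_congr' (q := (f · ∈ W)) (hq := hf) (by simp only [prepend_add_length, implies_true]),
      Nat.cast_add, add_comm]
  · rw [reachCost_of_not_exists W hf, reachCost_of_not_exists W,
      EReal.add_top_of_ne_bot (EReal.natCast_ne_bot _)]
    rintro ⟨k, hk⟩
    by_cases hkL : k < L.length
    · exact hprefix k hkL hk
    · exact hf ⟨_, prepend_of_not_lt f hkL ▸ hk⟩

lemma sSup_image_reachCost_lt {A : Set (ℕ → V)} {m : ℕ}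
    (hA : ∀ σ ∈ A, reachCost W σ < m) : sSup (reachCost W '' A) < m := by
  cases m with
  | zero =>
    have hempty : A = ∅ := Set.eq_empty_of_forall_notMem fun σ hσ => by
      simpa using (reachCost_lt_natCast_iff W).1 (hA σ hσ)
    rw [hempty, Set.image_empty, sSup_empty]
    exact bot_lt_iff_ne_bot.2 (EReal.natCast_ne_bot 0)
  | succ m =>
    refine (sSup_le ?_).trans_lt (EReal.natCast_lt_iff.2 m.lt_succ_self)
    rintro _ ⟨σ, hσ, rfl⟩
    obtain ⟨k, hk, hkW⟩ := (reachCost_lt_natCast_iff W).1 (hA σ hσ)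
    exact (reachCost_le_natCast_iff W).2 ⟨k, Nat.lt_succ_iff.1 hk, hkW⟩

end ReachCost

lemma Iset_append_subset (T : P → Set V) (h l : List V) : Iset T (h ++ l) ⊆ Iset T h :=
  fun _ hi u hu => hi u (List.mem_append_left l hu)

lemma reachCost_prepend_eq_of_notMem_Iset {T : P → Set V} {i : P} {h : List V}
    (hi : i ∉ Iset T h) (f g : ℕ → V) :
    reachCost (T i) (prepend h f) = reachCost (T i) (prepend h g) := by
  obtain ⟨u, hu, huT⟩ : ∃ u ∈ h, u ∈ T i := by simpa [Iset] using hi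
  obtain ⟨k, hk, rfl⟩ := List.getElem_of_mem hu
  refine reachCost_congr _ (m := h.length)
    (fun j hj => by rw [prepend_of_lt f hj, prepend_of_lt g hj]) ?_
  exact (reachCost_lt_natCast_iff _).2 ⟨k, hk, by rwa [prepend_of_lt f hk]⟩

variable (G : QGame P V)

lemma exists_isPlay (v : V) : ∃ ρ, G.IsPlay ρ ∧ ρ 0 = v := by
  choose next hnext using G.succ_exists
  exact ⟨fun n => next^[n] v,
    fun n => by simpa only [Function.iterate_succ_apply'] using hnext _, rfl⟩

lemma Pset_zero (h : List V) (v : V) : G.Pset 0 h v = {ρ | G.IsPlay ρ ∧ ρ 0 = v} := by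
  rw [Pset, Ordinal.limitRecOn_zero]

lemma Pset_succ (α : Ordinal) (h : List V) (v : V) :
    G.Pset (α + 1) h v = G.Pset α h v \ G.Eset (G.Pset α) h := by
  rw [Pset, Ordinal.limitRecOn_add_one]
  rfl

lemma Pset_limit {α : Ordinal} (hα : Order.IsSuccLimit α) (h : List V) (v : V) :
    G.Pset α h v = ⋂ β < α, G.Pset β h v := by
  rw [Pset, Ordinal.limitRecOn_limit _ _ _ _ hα]
  rfl

lemma Pset_succ_subset (α : Ordinal) (h : List V) (v : V) :
    G.Pset (α + 1) h v ⊆ G.Pset α h v := by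
  rw [Pset_succ]
  exact Set.sdiff_subset

lemma Pset_anti (h : List V) (v : V) : Antitone fun α => G.Pset α h v := by
  intro β α hβα
  show G.Pset α h v ⊆ G.Pset β h v
  induction α using Ordinal.limitRecOn with
  | zero => rw [nonpos_iff_eq_zero.1 hβα]
  | add_one o ih =>
    rcases hβα.lt_or_eq with hlt | rfl
    · exact (G.Pset_succ_subset o h v).trans (ih (Order.lt_add_one_iff.1 hlt))
    · exact le_rfl
  | limit o hlim _ =>
    rcases hβα.lt_or_eq with hlt | rfl
    · rw [G.Pset_limit hlim]
      exact Set.iInter₂_subset β hlt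
    · exact le_rfl

lemma isPlay_of_mem_Pset {α : Ordinal} {h : List V} {v : V} {ρ : ℕ → V}
    (hρ : ρ ∈ G.Pset α h v) : G.IsPlay ρ ∧ ρ 0 = v := by
  have hρ0 : ρ ∈ G.Pset 0 h v := G.Pset_anti h v (zero_le : 0 ≤ α) hρ
  rwa [Pset_zero] at hρ0

lemma shift_mem_Pset {α : Ordinal} {h : List V} {v : V} {ρ : ℕ → V}
    (hρ : ρ ∈ G.Pset α h v) (n : ℕ) : shift ρ n ∈ G.Pset α (h ++ playPrefix ρ n) (ρ n) := by
  induction α using Ordinal.limitRecOn with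
  | zero =>
    rw [Pset_zero] at hρ ⊢
    exact ⟨fun k => hρ.1 (n + k), rfl⟩
  | add_one o ih =>
    rw [Pset_succ] at hρ ⊢
    refine ⟨ih hρ.1, ?_⟩
    rintro ⟨m, v', hE, hne, hc⟩
    have hhist : h ++ playPrefix ρ n ++ playPrefix (shift ρ n) (m + 1) =
        h ++ playPrefix ρ (n + m + 1) := by
      rw [List.append_assoc, playPrefix_add]
      rfl
    refine hρ.2 ⟨n + m, v', hE, hne, fun ρ' hρ' => ?_⟩
    have hlt := hc ρ' (hhist ▸ hρ')
    rwa [hhist, prepend_append_shift] at hlt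
  | limit o hlim ih =>
    rw [G.Pset_limit hlim] at hρ ⊢
    exact Set.mem_iInter₂.2 fun β hβ => ih β hβ (Set.mem_iInter₂.1 hρ β hβ)

lemma Pset_eq_of_Iset_eq_empty {T : P → Set V} (hT : G.IsReachGame T) (α : Ordinal)
    {h : List V} (hI : Iset T h = ∅) (v : V) : G.Pset α h v = {ρ | G.IsPlay ρ ∧ ρ 0 = v} := by
  induction α using Ordinal.limitRecOn generalizing h v with
  | zero => exact G.Pset_zero h v
  | add_one o ih =>
    rw [Pset_succ, ih hI, sdiff_eq_left, Set.disjoint_left]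
    rintro ρ - ⟨n, v', -, -, hc⟩
    have hI' : Iset T (h ++ playPrefix ρ (n + 1)) = ∅ :=
      Set.subset_empty_iff.1 (hI ▸ Iset_append_subset T h _)
    obtain ⟨σ, hσ⟩ := G.exists_isPlay v'
    have hlt := hc σ (by rw [ih hI']; exact hσ)
    rw [hT, hT, ← prepend_append_shift h ρ (n + 1),
      reachCost_prepend_eq_of_notMem_Iset (hI' ▸ Set.notMem_empty _) σ] at hlt
    exact lt_irrefl _ hlt
  | limit o hlim ih =>
    rw [G.Pset_limit hlim]
    refine (Set.iInter₂_subset 0 hlim.bot_lt).trans (G.Pset_zero h v).le |>.antisymm ?_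
    exact Set.subset_iInter₂ fun β hβ => (ih β hβ hI v).ge

/-- The condition of `Eset` for the move to `v'` at the first vertex of `π`. -/
def IsEliminatingMove (Pr : List V → V → Set (ℕ → V)) (g : List V) (π : ℕ → V) (v' : V) :
    Prop :=
  G.E (π 0) v' ∧ v' ≠ π 1 ∧
    ∀ ρ' ∈ Pr (g ++ [π 0]) v',
      G.cost (G.owner (π 0)) (prepend (g ++ [π 0]) ρ') < G.cost (G.owner (π 0)) (prepend g π)

variable {G}

lemma IsEliminatingMove.mem_Eset {Pr : List V → V → Set (ℕ → V)} {g : List V} {π : ℕ → V}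
    {v' : V} (hmove : G.IsEliminatingMove Pr g π v') : π ∈ G.Eset Pr g :=
  ⟨0, v', by simpa only [IsEliminatingMove, zero_add, playPrefix_one] using hmove⟩

lemma IsEliminatingMove.notMem_Pset_succ {α : Ordinal} {g : List V} {π : ℕ → V} {v' : V}
    (hmove : G.IsEliminatingMove (G.Pset α) g π v') (u : V) : π ∉ G.Pset (α + 1) g u := by
  rw [Pset_succ]
  exact fun hπ => hπ.2 hmove.mem_Eset

lemma IsEliminatingMove.of_cost_le {Pr : List V → V → Set (ℕ → V)} {g : List V} {π σ : ℕ → V}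
    {v' : V} (hmove : G.IsEliminatingMove Pr g π v') (h0 : σ 0 = π 0) (h1 : σ 1 = π 1)
    (hcost : G.cost (G.owner (π 0)) (prepend g π) ≤ G.cost (G.owner (π 0)) (prepend g σ)) :
    G.IsEliminatingMove Pr g σ v' := by
  obtain ⟨hE, hne, hc⟩ := hmove
  rw [IsEliminatingMove, h0, h1]
  exact ⟨hE, hne, fun ρ' hρ' => (hc ρ' hρ').trans_le hcost⟩

lemma exists_isEliminatingMove_shift {Pr : List V → V → Set (ℕ → V)} {h : List V}
    {ρ : ℕ → V} (hρ : ρ ∈ G.Eset Pr h) :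
    ∃ n v', G.IsEliminatingMove Pr (h ++ playPrefix ρ n) (shift ρ n) v' := by
  obtain ⟨n, v', hE, hne, hc⟩ := hρ
  have hhist : h ++ playPrefix ρ n ++ [shift ρ n 0] = h ++ playPrefix ρ (n + 1) := by
    rw [List.append_assoc, playPrefix_succ]
    rfl
  refine ⟨n, v', hE, hne, ?_⟩
  rw [hhist, prepend_append_shift]
  exact hc

lemma Iset_nonempty_of_isEliminatingMove {T : P → Set V} (hT : G.IsReachGame T)
    {α : Ordinal} {g : List V} {π : ℕ → V} {v' : V}
    (hmove : G.IsEliminatingMove (G.Pset α) g π v') : (Iset T g).Nonempty := by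
  rw [Set.nonempty_iff_ne_empty]
  intro hI
  have hI' : Iset T (g ++ [π 0]) = ∅ := Set.subset_empty_iff.1 (hI ▸ Iset_append_subset T g _)
  obtain ⟨σ, hσ⟩ := G.exists_isPlay v'
  have hlt := hmove.2.2 σ (by rw [G.Pset_eq_of_Iset_eq_empty hT α hI']; exact hσ)
  rw [hT, hT, ← prepend_append_shift g π 1, playPrefix_one,
    reachCost_prepend_eq_of_notMem_Iset (hI' ▸ Set.notMem_empty _) σ] at hlt
  exact lt_irrefl _ hlt

/-- The witness is the owner of `π 0` if he is still in the game after `g`; otherwise no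
play through the edge `(π 0, π 1)` survives to stage `α + 1`, and any player still in the
game will do. -/
lemma exists_mem_Iset_forall_reachCost_lt {T : P → Set V} (hT : G.IsReachGame T)
    {α : Ordinal} {g : List V} {π : ℕ → V} {v' : V}
    (hmove : G.IsEliminatingMove (G.Pset α) g π v') :
    ∃ j ∈ Iset T g, ∀ σ ∈ G.Pset (α + 1) g (π 0), σ 1 = π 1 →
      reachCost (T j) σ < reachCost (T j) π := by
  set i := G.owner (π 0)
  have hsurvivor : ∀ σ ∈ G.Pset (α + 1) g (π 0), σ 1 = π 1 →
      G.cost i (prepend g σ) < G.cost i (prepend g π) := fun σ hσ hσ1 =>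
    lt_of_not_ge fun hle =>
      (hmove.of_cost_le (G.isPlay_of_mem_Pset hσ).2 hσ1 hle).notMem_Pset_succ _ hσ
  by_cases hi : i ∈ Iset T g
  · refine ⟨i, hi, fun σ hσ hσ1 => lt_of_not_ge fun hle => (hsurvivor σ hσ hσ1).not_ge ?_⟩
    rw [hT, hT, reachCost_prepend _ hi, reachCost_prepend _ hi]
    exact add_le_add_right hle _
  · obtain ⟨j, hj⟩ := Iset_nonempty_of_isEliminatingMove hT hmove
    refine ⟨j, hj, fun σ hσ hσ1 => absurd ?_ (hsurvivor σ hσ hσ1).ne⟩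
    rw [hT, hT, reachCost_prepend_eq_of_notMem_Iset hi]

section Topology

variable [TopologicalSpace V]

lemma continuous_prepend (L : List V) : Continuous (prepend L) := by
  refine continuous_pi fun k => ?_
  by_cases hk : k < L.length
  · simp only [prepend, dif_pos hk]
    exact continuous_const
  · simp only [prepend, dif_neg hk]
    exact continuous_apply _

variable [DiscreteTopology V]

lemma isClopen_setOf_reachCost_lt (W : Set V) (m : ℕ) :
    IsClopen {σ : ℕ → V | reachCost W σ < m} := by
  have hunion : {σ : ℕ → V | reachCost W σ < m} = ⋃ k ∈ Finset.range m, (· k) ⁻¹' W := by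
    ext σ
    simp [reachCost_lt_natCast_iff]
  rw [hunion]
  exact isClopen_biUnion_finset fun k _ => (isClopen_discrete W).preimage (continuous_apply k)

/-- Compactness is needed only when `f` never reaches `W`, to bound the hitting times on `A`
uniformly. -/
lemma exists_nat_forall_reachCost_lt_le [Finite V] {W : Set V} {A : Set (ℕ → V)}
    (hA : IsClosed A) {f : ℕ → V} (hAf : ∀ σ ∈ A, reachCost W σ < reachCost W f) :
    ∃ m : ℕ, (∀ σ ∈ A, reachCost W σ < m) ∧ (m : EReal) ≤ reachCost W f := by
  by_cases hf : ∃ k, f k ∈ W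
  · rw [reachCost_of_exists W hf] at hAf ⊢
    exact ⟨_, hAf, le_rfl⟩
  · rw [reachCost_of_not_exists W hf] at hAf
    have hcover : A ⊆ ⋃ m : ℕ, {σ | reachCost W σ < m} := fun σ hσ => by
      obtain ⟨k, hk⟩ := (reachCost_lt_top_iff W).1 (hAf σ hσ)
      exact Set.mem_iUnion.2 ⟨k + 1, (reachCost_lt_natCast_iff W).2 ⟨k, k.lt_succ_self, hk⟩⟩
    obtain ⟨m, hm⟩ := hA.isCompact.elim_directed_cover _
      (fun m => (isClopen_setOf_reachCost_lt W m).isOpen) hcover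
      (Monotone.directed_le fun m m' hmm' σ hσ => lt_of_lt_of_le hσ (EReal.natCast_le_iff.2 hmm'))
    exact ⟨m, hm, by rw [reachCost_of_not_exists W hf]; exact le_top⟩

lemma isClosed_Pset_zero (h : List V) (v : V) : IsClosed (G.Pset 0 h v) := by
  have hplays : G.Pset 0 h v = (⋂ n, {ρ : ℕ → V | G.E (ρ n) (ρ (n + 1))}) ∩ {ρ | ρ 0 = v} := by
    ext
    simp [Pset_zero, IsPlay]
  rw [hplays]
  refine IsClosed.inter ?_ (isClosed_eq (continuous_apply 0) continuous_const)
  refine isClosed_iInter fun n => ?_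
  exact (isClosed_discrete {p : V × V | G.E p.1 p.2}).preimage
    (f := fun ρ : ℕ → V => (ρ n, ρ (n + 1))) (by fun_prop)

lemma isOpen_Eset [Finite V] {T : P → Set V} (hT : G.IsReachGame T)
    {Pr : List V → V → Set (ℕ → V)} (hPr : ∀ h v, IsClosed (Pr h v)) (h : List V) :
    IsOpen (G.Eset Pr h) := by
  rw [isOpen_iff_forall_mem_open]
  rintro π ⟨n, v', hE, hne, hc⟩
  set L := h ++ playPrefix π (n + 1)
  set i := G.owner (π n)
  have hA : IsClosed (prepend L '' Pr L v') :=
    ((hPr L v').isCompact.image (continuous_prepend L)).isClosed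
  obtain ⟨m, hm, hmπ⟩ := exists_nat_forall_reachCost_lt_le hA (W := T i) (f := prepend h π) <| by
    rintro _ ⟨ρ', hρ', rfl⟩
    rw [← hT, ← hT]
    exact hc ρ' hρ'
  have hopen : IsOpen {π' | (m : EReal) ≤ reachCost (T i) (prepend h π')} := by
    have hpre : {π' | (m : EReal) ≤ reachCost (T i) (prepend h π')} =
        prepend h ⁻¹' {σ | reachCost (T i) σ < m}ᶜ := by
      ext
      simp
    rw [hpre]
    exact (isClopen_setOf_reachCost_lt (T i) m).compl.isOpen.preimage (continuous_prepend h)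
  -- The deviation at `n` stays eliminating as long as the first `n + 2` vertices are kept
  -- and the target of `i` is not reached before the bound `m` on the costs after deviating.
  refine ⟨(Set.Iio (n + 2)).pi (fun k => {π k}) ∩
      {π' | (m : EReal) ≤ reachCost (T i) (prepend h π')},
    ?_, (isOpen_set_pi (Set.finite_Iio _) fun k _ => isOpen_discrete _).inter hopen,
    ⟨fun k _ => rfl, hmπ⟩⟩
  rintro π' ⟨hagree, hmπ'⟩
  have hn : π' n = π n := hagree n (by simp)
  have hn1 : π' (n + 1) = π (n + 1) := hagree (n + 1) (by simp)
  have hpre : playPrefix π' (n + 1) = playPrefix π (n + 1) :=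
    playPrefix_congr fun k hk => hagree k (Set.mem_Iio.2 (by omega))
  refine ⟨n, v', hn ▸ hE, hn1 ▸ hne, fun ρ' hρ' => ?_⟩
  rw [hpre] at hρ' ⊢
  rw [hn, hT, hT]
  exact (hm _ ⟨ρ', hρ', rfl⟩).trans_le hmπ'

lemma isClosed_Pset [Finite V] {T : P → Set V} (hT : G.IsReachGame T) (α : Ordinal)
    (h : List V) (v : V) : IsClosed (G.Pset α h v) := by
  induction α using Ordinal.limitRecOn generalizing h v with
  | zero => exact G.isClosed_Pset_zero h v
  | add_one o ih =>
    rw [Pset_succ]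
    exact (ih h v).sdiff (isOpen_Eset hT ih h)
  | limit o hlim ih =>
    rw [G.Pset_limit hlim]
    exact isClosed_biInter fun β hβ => ih β hβ h v

lemma LamVec_ne_of_isEliminatingMove [Finite V] {T : P → Set V} (hT : G.IsReachGame T)
    {α : Ordinal} {g : List V} {π : ℕ → V} {v' : V} (hπ : π ∈ G.Pset α g (π 0))
    (hmove : G.IsEliminatingMove (G.Pset α) g π v') :
    LamVec G T α g (π 0) (π 1) ≠ LamVec G T (α + 1) g (π 0) (π 1) := by
  obtain ⟨j, hj, hlt⟩ := exists_mem_Iset_forall_reachCost_lt hT hmove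
  have hclosed : IsClosed {σ | σ ∈ G.Pset (α + 1) g (π 0) ∧ σ 1 = π 1} :=
    (isClosed_Pset hT _ _ _).inter (isClosed_eq (continuous_apply 1) continuous_const)
  obtain ⟨m, hm, hmπ⟩ := exists_nat_forall_reachCost_lt_le hclosed fun σ hσ => hlt σ hσ.1 hσ.2
  have hcost : G.cost j = reachCost (T j) := funext (hT j)
  intro hLam
  have hLamj := congrFun hLam j
  simp only [LamVec, if_pos hj, hcost] at hLamj
  have hπmax : reachCost (T j) π ≤
      sSup (reachCost (T j) '' {σ | σ ∈ G.Pset α g (π 0) ∧ σ 1 = π 1}) :=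
    le_sSup ⟨π, ⟨hπ, rfl⟩, rfl⟩
  rw [hLamj] at hπmax
  exact (sSup_image_reachCost_lt _ hm).not_ge (hmπ.trans hπmax)

end Topology

end QGame

open QGame in
theorem reach_LamVec_strict_decrease_general {P V : Type} [Finite V]
    (G : QGame P V) (T : P → Set V) (hT : G.IsReachGame T) (α : Ordinal) :
    (∀ (h : List V) (v : V), G.Pset α h v = G.Pset (α + 1) h v →
      ∀ v', G.E v v' → LamVec G T α h v v' = LamVec G T (α + 1) h v v') ∧
    (∀ (h : List V) (v : V), G.Pset α h v ≠ G.Pset (α + 1) h v →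
      ∃ (g : List V) (u u' : V), G.E u u' ∧
        LamVec G T α g u u' ≠ LamVec G T (α + 1) g u u') := by
  refine ⟨fun h v hP v' _ => funext fun i => by simp only [LamVec, hP], fun h v hP => ?_⟩
  let _ : TopologicalSpace V := ⊥
  have _ : DiscreteTopology V := ⟨rfl⟩
  obtain ⟨ρ, hρ, hρ'⟩ := Set.exists_of_ssubset ((G.Pset_succ_subset α h v).ssubset_of_ne hP.symm)
  have hρE : ρ ∈ G.Eset (G.Pset α) h := by
    rw [Pset_succ] at hρ'
    exact not_not.1 fun hE => hρ' ⟨hρ, hE⟩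
  obtain ⟨n, v', hmove⟩ := exists_isEliminatingMove_shift hρE
  have hπ : shift ρ n ∈ G.Pset α (h ++ playPrefix ρ n) (shift ρ n 0) := G.shift_mem_Pset hρ n
  exact ⟨_, _, _, (G.isPlay_of_mem_Pset hπ).1 0, LamVec_ne_of_isEliminatingMove hT hπ hmove⟩

open QGame in
/-- Strict decrease of the maximal-cost vectors when the
hierarchy strictly shrinks, in a quantitative reachability game: if
`P^I_α(v) = P^I_{α+1}(v)` then the maximal-cost vectors coincide at `α` and
`α+1` on every edge `(v,v')`; and if `P^I_α(v) ≠ P^I_{α+1}(v)` then some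
player set `J` (the set of players not yet served along some history `g`)
and some edge `(u,u')` witness `Λ̄(P^J_α(u),u') ≠ Λ̄(P^J_{α+1}(u),u')`. -/
theorem reach_LamVec_strict_decrease {P V : Type} [Finite P] [Finite V]
    (G : QGame P V) (T : P → Set V) (hT : G.IsReachGame T) (α : Ordinal) :
    (∀ (h : List V) (v : V), G.Pset α h v = G.Pset (α + 1) h v →
      ∀ v', G.E v v' → LamVec G T α h v v' = LamVec G T (α + 1) h v v') ∧
    (∀ (h : List V) (v : V), G.Pset α h v ≠ G.Pset (α + 1) h v →
      ∃ (g : List V) (u u' : V), G.E u u' ∧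
        LamVec G T α g u u' ≠ LamVec G T (α + 1) g u u') :=
  reach_LamVec_strict_decrease_general G T hT α
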